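/- arXiv:1808.05169 — 7 statements merged into one kernel-verified Lean document; each statement's English description precedes it below -/
import Mathlib

section
/- There exists ε > 0 such that for every Δt ∈ [0, ε) the quartic equation 0 = (1−ρΔt)β⁴ − (2−ρΔt+βγΔt)(σ_K/σ_S)²β² + (σ_K/σ_S)⁴(1−βγΔt) has exactly one solution β in the interval (0, σ_K/σ_S]. -/
/-- Key uniqueness lemma: two distinct roots of the quartic in `(0, k]` are impossible. -/
lemma quartic_key (k a b x y : ℝ) (hk : 0 < k) (ha0 : 0 ≤ a) (ha1 : a < 1) (hb : 0 ≤ b)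
    (hx0 : 0 < x) (hxy : x < y) (hyk : y ≤ k)
    (hex : 0 = (1 - a) * x ^ 4 - (2 - a + x * b) * k ^ 2 * x ^ 2 + k ^ 4 * (1 - x * b))
    (hey : 0 = (1 - a) * y ^ 4 - (2 - a + y * b) * k ^ 2 * y ^ 2 + k ^ 4 * (1 - y * b)) :
    False := by
  have hy0 : 0 < y := hx0.trans hxy
  have hxk : x < k := hxy.trans_le hyk
  set S : ℝ := x ^ 3 + x ^ 2 * y + x * y ^ 2 + y ^ 3 with hS
  set Q : ℝ := (1 - a) * S - (2 - a) * k ^ 2 * (x + y)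
      - b * (k ^ 2 * (x ^ 2 + x * y + y ^ 2) + k ^ 4) with hQdef
  have hQ : (x - y) * Q = 0 := by
    rw [hQdef, hS]; linear_combination hey - hex
  have hQ0 : Q = 0 := by
    rcases mul_eq_zero.mp hQ with h | h
    · exact absurd (sub_eq_zero.mp h) (ne_of_lt hxy)
    · exact h
  have hk2x : 0 < k ^ 2 - x ^ 2 := by nlinarith
  have hk2y : 0 ≤ k ^ 2 - y ^ 2 := by nlinarith
  have hxy0 : 0 < x + y := add_pos hx0 hy0
  have hgap : 0 < 2 * k ^ 2 * (x + y) - S := by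
    nlinarith [mul_pos hxy0 hk2x, mul_nonneg hxy0.le hk2y]
  have h1 : 0 < (1 - a) * (2 * k ^ 2 * (x + y) - S) :=
    mul_pos (by linarith) hgap
  have h2 : 0 ≤ a * (k ^ 2 * (x + y)) := by positivity
  have h3 : 0 ≤ b * (k ^ 2 * (x ^ 2 + x * y + y ^ 2) + k ^ 4) := by positivity
  have : Q < 0 := by nlinarith [h1, h2, h3]
  linarith

/-- For sufficiently small `Δt ≥ 0`, the monopoly quartic equation
`0 = (1−ρΔt)β⁴ − (2−ρΔt+βγΔt)(σ_K/σ_S)²β² + (σ_K/σ_S)⁴(1−βγΔt)` has exactly one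
solution `β` in the interval `(0, σ_K/σ_S]`. -/
theorem stmt0 (σS σK γ ρ : ℝ) (hσS : 0 < σS) (hσK : 0 < σK) (hγ : 0 < γ) (hρ : 0 < ρ) :
    ∃ ε > 0, ∀ Δt : ℝ, 0 ≤ Δt → Δt < ε →
      ∃! β : ℝ, β ∈ Set.Ioc 0 (σK / σS) ∧
        0 = (1 - ρ * Δt) * β ^ 4
              - (2 - ρ * Δt + β * γ * Δt) * (σK / σS) ^ 2 * β ^ 2
              + (σK / σS) ^ 4 * (1 - β * γ * Δt) := by
  set k : ℝ := σK / σS with hkdef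
  have hk : 0 < k := div_pos hσK hσS
  refine ⟨1 / ρ, by positivity, ?_⟩
  intro Δt hΔt hΔtε
  set a : ℝ := ρ * Δt with ha
  set b : ℝ := γ * Δt with hb
  have ha0 : 0 ≤ a := by positivity
  have ha1 : a < 1 := by
    have h1 : Δt * ρ < 1 := (lt_div_iff₀ hρ).mp hΔtε
    rw [ha]; nlinarith
  have hb0 : 0 ≤ b := by positivity
  -- the quartic as a function
  set f : ℝ → ℝ := fun t =>
      (1 - a) * t ^ 4 - (2 - a + t * b) * k ^ 2 * t ^ 2 + k ^ 4 * (1 - t * b) with hf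
  have hcont : Continuous f := by
    rw [hf]; fun_prop
  have hf0 : f 0 = k ^ 4 := by simp [hf]
  have hfk : f k = -2 * b * k ^ 5 := by rw [hf]; ring
  have hmem : (0 : ℝ) ∈ Set.Icc (f k) (f 0) := by
    constructor
    · rw [hfk]; nlinarith [mul_nonneg hb0 (pow_pos hk 5).le]
    · rw [hf0]; positivity
  obtain ⟨β, hβmem, hβeq⟩ :=
    intermediate_value_Icc' (le_of_lt hk) hcont.continuousOn hmem
  have hβ0 : 0 < β := by
    rcases lt_or_eq_of_le hβmem.1 with h | h
    · exact h
    · exfalso; rw [← h] at hβeq; rw [hf0] at hβeq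
      exact (pow_ne_zero 4 (ne_of_gt hk)) hβeq
  -- translate statement equation into f
  have key : ∀ t : ℝ, (0 = (1 - ρ * Δt) * t ^ 4
        - (2 - ρ * Δt + t * γ * Δt) * k ^ 2 * t ^ 2
        + k ^ 4 * (1 - t * γ * Δt)) ↔ 0 = f t := by
    intro t
    rw [hf]
    constructor <;> intro h <;> linear_combination h
  refine ⟨β, ⟨⟨hβ0, hβmem.2⟩, (key β).mpr hβeq.symm⟩, ?_⟩
  rintro y ⟨⟨hy0, hyk⟩, hyeq⟩
  have hyeq' : 0 = f y := (key y).mp hyeq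
  rcases lt_trichotomy y β with h | h | h
  · exact absurd (quartic_key k a b y β hk ha0 ha1 hb0 hy0 h hβmem.2 hyeq' hβeq.symm) id
  · exact h
  · exact absurd (quartic_key k a b β y hk ha0 ha1 hb0 hβ0 h hyk hβeq.symm hyeq') id
end

section
/- There exist ε > 0, C > 0 and a function β : [0, ε) → (0, σ_K/σ_S] such that for every Δt ∈ [0, ε), β(Δt) is the unique solution in (0, σ_K/σ_S] of the quartic equation 0 = (1−ρΔt)β⁴ − (2−ρΔt+βγΔt)(σ_K/σ_S)²β² + (σ_K/σ_S)⁴(1−βγΔt), and moreover |β(Δt) − (σ_K/σ_S − (γσ_K³/(2σ_S³))^{1/2}·√Δt)| ≤ C·Δt for all Δt ∈ [0, ε). -/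
/-!
With `κ = σ_K/σ_S`, the substitution `β = κ c` turns the monopoly quartic into `κ⁴ q(c)`, where
`q(c) = (1 - c²)² + ρΔt c²(1 - c²) - κγΔt c(c² + 1)`.
On `[0, 1]` the polynomial `q` goes from `q 0 = 1` to `q 1 = -2κγΔt ≤ 0`, so it has a root there,
and it is strictly decreasing as soon as `ρΔt ≤ 1`, so that root is unique.
In terms of `w = 1 - c²` the equation reads `w² = 2κγΔt + O(Δt w)`, hence
`w = √(2κγΔt) + O(Δt)`, and `c = 1 - w/2 + O(w²)` gives the expansion.
-/

def monopolyQuartic (γ ρ κ Δt β : ℝ) : ℝ :=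
  (1 - ρ * Δt) * β ^ 4 - (2 - ρ * Δt + β * γ * Δt) * κ ^ 2 * β ^ 2 + κ ^ 4 * (1 - β * γ * Δt)

def normalizedQuartic (a r c : ℝ) : ℝ :=
  (1 - c ^ 2) ^ 2 + r * c ^ 2 * (1 - c ^ 2) - a * c * (c ^ 2 + 1)

lemma monopolyQuartic_mul (γ ρ κ Δt c : ℝ) :
    monopolyQuartic γ ρ κ Δt (κ * c) = κ ^ 4 * normalizedQuartic (κ * γ * Δt) (ρ * Δt) c := by
  unfold monopolyQuartic normalizedQuartic
  ring

lemma monopolyQuartic_eq_zero_iff {γ ρ κ Δt b : ℝ} (hκ : κ ≠ 0) :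
    monopolyQuartic γ ρ κ Δt b = 0 ↔ normalizedQuartic (κ * γ * Δt) (ρ * Δt) (b / κ) = 0 := by
  rw [← mul_div_cancel₀ b hκ, monopolyQuartic_mul, mul_div_cancel₀ b hκ]
  exact mul_eq_zero_iff_left (pow_ne_zero 4 hκ)

section NormalizedQuartic

variable {a r : ℝ}

lemma strictAntiOn_normalizedQuartic (ha : 0 ≤ a) (hr₀ : 0 ≤ r) (hr₁ : r ≤ 1) :
    StrictAntiOn (normalizedQuartic a r) (Set.Icc 0 1) := by
  rintro b₁ ⟨hb₁, -⟩ b₂ ⟨-, hb₂⟩ h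
  have hdiff : normalizedQuartic a r b₁ - normalizedQuartic a r b₂ =
      (b₂ - b₁) * ((b₁ + b₂) * ((1 - r) * (2 - b₁ ^ 2 - b₂ ^ 2) + r)
        + a * (b₁ ^ 2 + b₁ * b₂ + b₂ ^ 2 + 1)) := by
    unfold normalizedQuartic
    ring
  have hgap : 0 < 2 - b₁ ^ 2 - b₂ ^ 2 := by nlinarith
  have hmix : 0 < (1 - r) * (2 - b₁ ^ 2 - b₂ ^ 2) + r := by
    rcases hr₀.eq_or_lt with rfl | hr
    · simpa using hgap
    · nlinarith
  have hfactor : 0 < (b₁ + b₂) * ((1 - r) * (2 - b₁ ^ 2 - b₂ ^ 2) + r)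
      + a * (b₁ ^ 2 + b₁ * b₂ + b₂ ^ 2 + 1) := by
    have := mul_pos (by linarith : 0 < b₁ + b₂) hmix
    have : 0 ≤ a * (b₁ ^ 2 + b₁ * b₂ + b₂ ^ 2 + 1) := mul_nonneg ha (by nlinarith)
    linarith
  nlinarith [mul_pos (sub_pos.2 h) hfactor]

lemma exists_normalizedQuartic_eq_zero (r : ℝ) (ha : 0 ≤ a) :
    ∃ c ∈ Set.Ioc (0 : ℝ) 1, normalizedQuartic a r c = 0 := by
  have hcont : ContinuousOn (normalizedQuartic a r) (Set.Icc 0 1) := by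
    unfold normalizedQuartic
    fun_prop
  have hzero : (0 : ℝ) ∈ Set.Icc (normalizedQuartic a r 1) (normalizedQuartic a r 0) := by
    refine ⟨?_, by norm_num [normalizedQuartic]⟩
    norm_num [normalizedQuartic]
    exact ha
  obtain ⟨c, ⟨hc₀, hc₁⟩, hc⟩ := intermediate_value_Icc' zero_le_one hcont hzero
  refine ⟨c, ⟨hc₀.lt_of_ne ?_, hc₁⟩, hc⟩
  rintro rfl
  norm_num [normalizedQuartic] at hc

lemma abs_sub_le_of_abs_sq_sub_sq_le {w s K : ℝ} (hw : 0 ≤ w) (hs : 0 ≤ s) (hK : 0 ≤ K)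
    (h : |w ^ 2 - s ^ 2| ≤ K * w) : |w - s| ≤ K := by
  rcases (add_nonneg hw hs).eq_or_lt with hws | hws
  · obtain ⟨rfl, rfl⟩ : w = 0 ∧ s = 0 := ⟨by linarith, by linarith⟩
    simpa using hK
  refine le_of_mul_le_mul_right ?_ hws
  calc |w - s| * (w + s) = |w ^ 2 - s ^ 2| := by
        rw [← abs_of_pos hws, ← abs_mul]
        ring_nf
    _ ≤ K * w := h
    _ ≤ K * (w + s) := by nlinarith

lemma abs_sub_one_sub_sqrt_le_of_normalizedQuartic_eq_zero (ha : 0 ≤ a) (hr : 0 ≤ r) {c : ℝ}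
    (hc₀ : 0 ≤ c) (hc₁ : c ≤ 1) (hc : normalizedQuartic a r c = 0) :
    |c - (1 - √(a / 2))| ≤ 3 * a + r / 2 := by
  set w := 1 - c ^ 2
  set s := √(2 * a) with hs
  have hw₀ : 0 ≤ w := by nlinarith
  have hw_ge : 1 - c ≤ w := by nlinarith
  have hs₀ : 0 ≤ s := Real.sqrt_nonneg _
  have hs_sq : s ^ 2 = 2 * a := Real.sq_sqrt (by linarith)
  have hwsq : w ^ 2 = a * c * (c ^ 2 + 1) - r * c ^ 2 * w := by
    unfold normalizedQuartic at hc
    linear_combination hc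
  have hw_sq_le : w ^ 2 ≤ 2 * a := by
    have : 0 ≤ r * c ^ 2 * w := by positivity
    nlinarith [mul_le_mul_of_nonneg_left (by nlinarith : c * (c ^ 2 + 1) ≤ 2) ha]
  have hws : |w - s| ≤ 4 * a + r := by
    refine abs_sub_le_of_abs_sq_sub_sq_le hw₀ hs₀ (by positivity) ?_
    -- `2 - c(c² + 1) = (1 - c)(c² + c + 2) ≤ 4w`, and `c² ≤ 1`.
    have hcubic : 0 ≤ 2 - c * (c ^ 2 + 1) ∧ 2 - c * (c ^ 2 + 1) ≤ 4 * w := by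
      constructor <;> nlinarith
    have hrc : r * c ^ 2 * w ≤ r * w := by
      have : 0 ≤ r * w := by positivity
      nlinarith
    rw [hs_sq, abs_le]
    constructor <;> nlinarith [mul_nonneg ha hcubic.1, mul_le_mul_of_nonneg_left hcubic.2 ha,
      (by positivity : 0 ≤ r * c ^ 2 * w)]
  have hcw : |c - (1 - w / 2)| ≤ w ^ 2 / 2 := by
    have hsq : (1 - c) ^ 2 ≤ w ^ 2 := pow_le_pow_left₀ (by linarith) hw_ge 2
    rw [abs_le]
    constructor <;> nlinarith
  have hsqrt : √(a / 2) = s / 2 := by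
    rw [hs, show 2 * a = 2 ^ 2 * (a / 2) by ring, Real.sqrt_mul (by norm_num),
      Real.sqrt_sq (by norm_num)]
    ring
  calc |c - (1 - √(a / 2))| = |(c - (1 - w / 2)) + (s - w) / 2| := by
        rw [hsqrt]
        ring_nf
    _ ≤ |c - (1 - w / 2)| + |w - s| / 2 :=
        (abs_add_le _ _).trans_eq (by rw [abs_div, abs_two, abs_sub_comm s w])
    _ ≤ 3 * a + r / 2 := by linarith

end NormalizedQuartic

lemma abs_mul_sub_sub_sqrt_le {σS σK γ ρ Δt c : ℝ} (hσS : 0 < σS) (hσK : 0 < σK) (hγ : 0 ≤ γ)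
    (hρ : 0 ≤ ρ) (hΔt : 0 ≤ Δt) (hc₀ : 0 ≤ c) (hc₁ : c ≤ 1)
    (hc : normalizedQuartic (σK / σS * γ * Δt) (ρ * Δt) c = 0) :
    |σK / σS * c - (σK / σS - √(γ * σK ^ 3 / (2 * σS ^ 3)) * √Δt)|
      ≤ σK / σS * (3 * (σK / σS) * γ + ρ / 2) * Δt := by
  set κ := σK / σS with hκ_def
  have hκ : 0 < κ := div_pos hσK hσS
  have hsqrt : √(γ * σK ^ 3 / (2 * σS ^ 3)) * √Δt = κ * √(κ * γ * Δt / 2) := by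
    nth_rw 1 [← Real.sqrt_sq hκ.le]
    rw [← Real.sqrt_mul (by positivity), ← Real.sqrt_mul (sq_nonneg _), hκ_def]
    congr 1
    field_simp
  calc |κ * c - (κ - √(γ * σK ^ 3 / (2 * σS ^ 3)) * √Δt)|
      = κ * |c - (1 - √(κ * γ * Δt / 2))| := by
        rw [hsqrt, ← mul_one_sub, ← mul_sub, abs_mul, abs_of_pos hκ]
    _ ≤ κ * (3 * (κ * γ * Δt) + ρ * Δt / 2) := by
        gcongr
        exact abs_sub_one_sub_sqrt_le_of_normalizedQuartic_eq_zero (by positivity)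
          (by positivity) hc₀ hc₁ hc
    _ = κ * (3 * κ * γ + ρ / 2) * Δt := by ring

/-- existence of a branch `β(Δt)` of unique solutions to the monopoly
quartic in `(0, σ_K/σ_S]`, with first-order asymptotics
`β(Δt) = σ_K/σ_S − (γσ_K³/(2σ_S³))^{1/2} √Δt + O(Δt)`. -/
theorem stmt1 (σS σK γ ρ : ℝ) (hσS : 0 < σS) (hσK : 0 < σK) (hγ : 0 < γ) (hρ : 0 < ρ) :
    ∃ ε > 0, ∃ C > 0, ∃ β : ℝ → ℝ, ∀ Δt : ℝ, 0 ≤ Δt → Δt < ε →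
      (β Δt ∈ Set.Ioc 0 (σK / σS) ∧
        0 = (1 - ρ * Δt) * (β Δt) ^ 4
              - (2 - ρ * Δt + β Δt * γ * Δt) * (σK / σS) ^ 2 * (β Δt) ^ 2
              + (σK / σS) ^ 4 * (1 - β Δt * γ * Δt)) ∧
      (∀ b : ℝ, b ∈ Set.Ioc 0 (σK / σS) →
        0 = (1 - ρ * Δt) * b ^ 4
              - (2 - ρ * Δt + b * γ * Δt) * (σK / σS) ^ 2 * b ^ 2
              + (σK / σS) ^ 4 * (1 - b * γ * Δt) → b = β Δt) ∧
      |β Δt - (σK / σS - Real.sqrt (γ * σK ^ 3 / (2 * σS ^ 3)) * Real.sqrt Δt)| ≤ C * Δt := by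
  set κ := σK / σS with hκ_def
  have hκ : 0 < κ := div_pos hσK hσS
  choose! c hc_mem hc_root using fun Δt (hΔt : 0 ≤ Δt) =>
    exists_normalizedQuartic_eq_zero (a := κ * γ * Δt) (ρ * Δt) (by positivity)
  refine ⟨1 / ρ, by positivity, κ * (3 * κ * γ + ρ / 2), by positivity, fun Δt => κ * c Δt,
    fun Δt hΔt hΔtε => ?_⟩
  have hρΔt : ρ * Δt ≤ 1 := by
    rw [lt_div_iff₀ hρ] at hΔtε
    linarith
  obtain ⟨hc₀, hc₁⟩ := hc_mem Δt hΔt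
  have hroot : monopolyQuartic γ ρ κ Δt (κ * c Δt) = 0 := by
    rw [monopolyQuartic_mul, hc_root Δt hΔt, mul_zero]
  refine ⟨⟨⟨mul_pos hκ hc₀, mul_le_of_le_one_right hκ.le hc₁⟩, hroot.symm⟩, fun b hb hb_root => ?_,
    abs_mul_sub_sub_sqrt_le hσS hσK hγ.le hρ.le hΔt hc₀.le hc₁ (hc_root Δt hΔt)⟩
  have hq : normalizedQuartic (κ * γ * Δt) (ρ * Δt) (b / κ) = 0 :=
    (monopolyQuartic_eq_zero_iff hκ.ne').1 hb_root.symm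
  have hbc : b / κ = c Δt :=
    strictAntiOn_normalizedQuartic (by positivity) (by positivity) hρΔt |>.injOn
      ⟨div_nonneg hb.1.le hκ.le, (div_le_one hκ).2 hb.2⟩ ⟨hc₀.le, hc₁⟩
      (hq.trans (hc_root Δt hΔt).symm)
  show b = κ * c Δt
  rw [← hbc, mul_div_cancel₀ b hκ.ne']
end

section
/- Let Δt > 0 with ρΔt < 1 and let β_Σ > 0. Then the quadratic function β ↦ g(β_Σ, β, Δt) := (1−ρΔt)β²β_Σ² − (2−ρΔt + β_Σγ Δt)(σ_K/σ_S)²ββ_Σ + (σ_K/σ_S)⁴(1−βγΔt) has exactly one root β in the open interval (0, σ_K²/(β_Σσ_S²)); equivalently, there is exactly one β with g(β_Σ, β, Δt) = 0 and 0 < ββ_Σ < σ_K²/σ_S². -/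
/-- for `Δt > 0` with `ρΔt < 1` and `β_Σ > 0`, the quadratic
`β ↦ g(β_Σ, β, Δt)` has exactly one root in the open interval `(0, σ_K²/(β_Σσ_S²))`. -/
theorem stmt12 (σS σK γ ρ : ℝ) (hσS : 0 < σS) (hσK : 0 < σK) (hγ : 0 < γ) (hρ : 0 < ρ)
    (Δt : ℝ) (hΔt : 0 < Δt) (hρΔt : ρ * Δt < 1) (βSum : ℝ) (hβSum : 0 < βSum) :
    ∃! β : ℝ, β ∈ Set.Ioo 0 (σK ^ 2 / (βSum * σS ^ 2)) ∧
      (1 - ρ * Δt) * β ^ 2 * βSum ^ 2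
        - (2 - ρ * Δt + βSum * γ * Δt) * (σK / σS) ^ 2 * β * βSum
        + (σK / σS) ^ 4 * (1 - β * γ * Δt) = 0 := by
  set L : ℝ := σK ^ 2 / (βSum * σS ^ 2) with hLdef
  set a : ℝ := (1 - ρ * Δt) * βSum ^ 2 with hadef
  set b : ℝ := -((2 - ρ * Δt + βSum * γ * Δt) * (σK / σS) ^ 2 * βSum)
      - (σK / σS) ^ 4 * γ * Δt with hbdef
  set c : ℝ := (σK / σS) ^ 4 with hcdef
  have key : ∀ β : ℝ, (1 - ρ * Δt) * β ^ 2 * βSum ^ 2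
        - (2 - ρ * Δt + βSum * γ * Δt) * (σK / σS) ^ 2 * β * βSum
        + (σK / σS) ^ 4 * (1 - β * γ * Δt) = a * β ^ 2 + b * β + c := by
    intro β; simp only [hadef, hbdef, hcdef]; ring
  have ha : 0 < a := by
    have : 0 < 1 - ρ * Δt := by linarith
    positivity
  have hL : 0 < L := by positivity
  have hc : 0 < c := by positivity
  have hflmul : (a * L ^ 2 + b * L + c) * (βSum * σS ^ 6)
      = -(σK ^ 4 * σS ^ 2 * βSum ^ 2 * γ * Δt + σK ^ 6 * γ * Δt) := by
    simp only [hadef, hbdef, hcdef, hLdef]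
    field_simp
    ring
  have hfL : a * L ^ 2 + b * L + c < 0 := by
    have h1 : 0 < βSum * σS ^ 6 := by positivity
    have h2 : (0:ℝ) < σK ^ 4 * σS ^ 2 * βSum ^ 2 * γ * Δt + σK ^ 6 * γ * Δt := by positivity
    nlinarith [hflmul]
  -- existence via IVT
  have hcont : ContinuousOn (fun β : ℝ => a * β ^ 2 + b * β + c) (Set.Icc 0 L) :=
    (Continuous.continuousOn (by continuity))
  have hsub := intermediate_value_Ioo' (le_of_lt hL) hcont
  have hmem : (0:ℝ) ∈ Set.Ioo (a * L ^ 2 + b * L + c) (a * 0 ^ 2 + b * 0 + c) := by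
    constructor
    · exact hfL
    · simpa using hc
  obtain ⟨x, hxI, hx⟩ := hsub hmem
  refine ⟨x, ⟨hxI, by rw [key]; exact hx⟩, ?_⟩
  rintro y ⟨hyI, hy⟩
  rw [key] at hy
  -- uniqueness
  by_contra hne
  have h2 : (y - x) * (a * (y + x) + b) = 0 := by linear_combination hy - hx
  have h3 : a * (y + x) + b = 0 := by
    rcases mul_eq_zero.1 h2 with h | h
    · exact absurd (sub_eq_zero.1 h) hne
    · exact h
  have h4 : c = a * y * x := by linear_combination hy - y * h3
  have h5 : a * L ^ 2 + b * L + c = a * (L - y) * (L - x) := by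
    linear_combination L * h3 + h4
  have h6 : 0 < a * (L - y) * (L - x) :=
    mul_pos (mul_pos ha (by linarith [hyI.2])) (by linarith [hxI.2])
  linarith [h5 ▸ hfL]
end

section
/- Let Δt > 0 with 0 < ρΔt < 1, and for each β_Σ > 0 let u(β_Σ) denote the unique root of the quadratic β ↦ g(β_Σ, β, Δt) in the interval (0, σ_K²/(β_Σσ_S²)). Then the function β_Σ ↦ u(β_Σ) is strictly decreasing on (0, ∞). -/
/-- for `Δt > 0` with `0 < ρΔt < 1`, the map `β_Σ ↦ u(β_Σ)` sending
`β_Σ > 0` to the unique root of `β ↦ g(β_Σ, β, Δt)` in `(0, σ_K²/(β_Σσ_S²))` is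
strictly decreasing on `(0, ∞)`. -/
theorem stmt13 (σS σK γ ρ : ℝ) (hσS : 0 < σS) (hσK : 0 < σK) (hγ : 0 < γ) (hρ : 0 < ρ)
    (Δt : ℝ) (hΔt : 0 < Δt) (hρΔt : ρ * Δt < 1) :
    ∀ b₁ b₂ u₁ u₂ : ℝ, 0 < b₁ → b₁ < b₂ →
      u₁ ∈ Set.Ioo 0 (σK ^ 2 / (b₁ * σS ^ 2)) →
      (1 - ρ * Δt) * u₁ ^ 2 * b₁ ^ 2
        - (2 - ρ * Δt + b₁ * γ * Δt) * (σK / σS) ^ 2 * u₁ * b₁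
        + (σK / σS) ^ 4 * (1 - u₁ * γ * Δt) = 0 →
      u₂ ∈ Set.Ioo 0 (σK ^ 2 / (b₂ * σS ^ 2)) →
      (1 - ρ * Δt) * u₂ ^ 2 * b₂ ^ 2
        - (2 - ρ * Δt + b₂ * γ * Δt) * (σK / σS) ^ 2 * u₂ * b₂
        + (σK / σS) ^ 4 * (1 - u₂ * γ * Δt) = 0 →
      u₂ < u₁ := by
  intro b₁ b₂ u₁ u₂ hb₁ hb hu₁ he₁ hu₂ he₂
  have hb₂ : 0 < b₂ := hb₁.trans hb
  set k : ℝ := (σK / σS) ^ 2 with hkdef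
  have hk : 0 < k := by positivity
  have hpow : (σK / σS) ^ 4 = k ^ 2 := by rw [hkdef]; ring
  rw [hpow] at he₁ he₂
  have hσS2 : (0:ℝ) < σS ^ 2 := by positivity
  have hkS : k * σS ^ 2 = σK ^ 2 := by
    rw [hkdef, div_pow]; field_simp
  have hu₁p : 0 < u₁ := hu₁.1
  have hu₂p : 0 < u₂ := hu₂.1
  have h1 : u₁ * (b₁ * σS ^ 2) < σK ^ 2 := (lt_div_iff₀ (by positivity)).mp hu₁.2
  have h2 : u₂ * (b₂ * σS ^ 2) < σK ^ 2 := (lt_div_iff₀ (by positivity)).mp hu₂.2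
  have hub1 : u₁ * b₁ < k :=
    lt_of_mul_lt_mul_right (by nlinarith [h1, hkS]) hσS2.le
  have hub2 : u₂ * b₂ < k :=
    lt_of_mul_lt_mul_right (by nlinarith [h2, hkS]) hσS2.le
  rcases lt_or_ge (u₁ * b₂) k with hcase | hcase
  · -- main case
    by_contra hcon
    push_neg at hcon  -- u₁ ≤ u₂
    -- bracket < 0
    have hρΔ : 0 < ρ * Δt := mul_pos hρ hΔt
    have hbr : (1 - ρ*Δt) * u₁ * (u₁*(b₁+b₂)) - γ*Δt*k*u₁*(b₁+b₂)
        - (2 - ρ*Δt) * k * u₁ < 0 := by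
      nlinarith [mul_pos hk hu₁p, mul_pos (mul_pos hγ hΔt) (mul_pos hk (mul_pos hu₁p (by linarith : (0:ℝ) < b₁ + b₂))),
        mul_lt_mul_of_pos_left hub1 (mul_pos (by linarith : (0:ℝ) < 1 - ρ*Δt) hu₁p),
        mul_lt_mul_of_pos_left hcase (mul_pos (by linarith : (0:ℝ) < 1 - ρ*Δt) hu₁p)]
    have hq1 : (1 - ρ*Δt) * u₁^2 * b₂^2 - (2 - ρ*Δt + b₂*γ*Δt) * k * u₁ * b₂
        + k^2 * (1 - u₁*γ*Δt) < 0 := by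
      have h6 : (1 - ρ*Δt) * u₁^2 * b₂^2 - (2 - ρ*Δt + b₂*γ*Δt) * k * u₁ * b₂
          + k^2 * (1 - u₁*γ*Δt)
          = (b₂ - b₁) * ((1 - ρ*Δt) * u₁ * (u₁*(b₁+b₂)) - γ*Δt*k*u₁*(b₁+b₂)
            - (2 - ρ*Δt) * k * u₁) := by linear_combination he₁
      rw [h6]
      exact mul_neg_of_pos_of_neg (by linarith) hbr
    -- factor identity at u = k/b₂ (scaled)
    have h5 : 0 < k - u₂ * b₂ := by linarith
    have hfac : (k - u₂*b₂) * ((1 - ρ*Δt)*b₂^2*(k + u₂*b₂)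
        - ((2 - ρ*Δt + b₂*γ*Δt)*k*b₂ + k^2*γ*Δt)*b₂)
        = -(k^2*γ*Δt*b₂*(b₂^2 + k)) := by
      linear_combination (-b₂^2) * he₂
    have hAB : (1 - ρ*Δt)*b₂^2*(k + u₂*b₂)
        - ((2 - ρ*Δt + b₂*γ*Δt)*k*b₂ + k^2*γ*Δt)*b₂ < 0 := by
      by_contra hc2
      push_neg at hc2
      have hposq : 0 < k^2*γ*Δt*b₂*(b₂^2 + k) := by positivity
      linarith [hfac, mul_nonneg h5.le hc2, hposq]
    have hA2 : (1 - ρ*Δt)*b₂^2*(u₁*b₂ + u₂*b₂)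
        - ((2 - ρ*Δt + b₂*γ*Δt)*k*b₂ + k^2*γ*Δt)*b₂ < 0 := by
      linarith [hAB, mul_lt_mul_of_pos_left hcase (mul_pos (by linarith : (0:ℝ) < 1 - ρ*Δt) (pow_pos hb₂ 2))]
    have hfin : 0 ≤ (u₁ - u₂) * ((1 - ρ*Δt)*b₂^2*(u₁*b₂ + u₂*b₂)
        - ((2 - ρ*Δt + b₂*γ*Δt)*k*b₂ + k^2*γ*Δt)*b₂) :=
      mul_nonneg_of_nonpos_of_nonpos (by linarith : u₁ - u₂ ≤ 0) hA2.le
    have h7 : b₂ * ((1 - ρ*Δt) * u₁^2 * b₂^2 - (2 - ρ*Δt + b₂*γ*Δt) * k * u₁ * b₂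
        + k^2 * (1 - u₁*γ*Δt))
        = (u₁ - u₂) * ((1 - ρ*Δt)*b₂^2*(u₁*b₂ + u₂*b₂)
          - ((2 - ρ*Δt + b₂*γ*Δt)*k*b₂ + k^2*γ*Δt)*b₂) := by
      linear_combination b₂ * he₂
    linarith [hfin, mul_neg_of_pos_of_neg hb₂ hq1, h7]
  · -- trivial case : u₂*b₂ < k ≤ u₁*b₂
    have : u₂ * b₂ < u₁ * b₂ := by linarith
    exact lt_of_mul_lt_mul_right this hb₂.le
end

section
/- Let λ > 0, γ > 0, Δt > 0 and ρ > 0 with ρΔt ∈ (0, 1). Then there exists a unique pair (E, ζ) of real numbers with E > 0 and ζ > 0 satisfying E/(1−ρΔt) = 2λζ and ζ = (E + γΔt)/(E + γΔt + 2λ); moreover this ζ satisfies ζ ∈ (0, 1). -/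
/-!
Eliminating `ζ = E / (2λ(1 - ρΔt))` turns the two equations into a quadratic
`E² + bE = c` with `c = 2λ(1 - ρΔt)γΔt > 0`. Its roots have product `-c < 0`, so exactly one of
them is positive, and then `ζ < 1` because `ζ = a / (a + 2λ)` with `a = E + γΔt > 0`.
-/

lemma existsUnique_pos_sq_add_mul_eq (b : ℝ) {c : ℝ} (hc : 0 < c) :
    ∃! x : ℝ, 0 < x ∧ x ^ 2 + b * x = c := by
  set s := Real.sqrt (b ^ 2 + 4 * c)
  have hs : s ^ 2 = b ^ 2 + 4 * c := Real.sq_sqrt (by positivity)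
  have hbs : b < s := by nlinarith [Real.sqrt_nonneg (b ^ 2 + 4 * c)]
  refine ⟨(s - b) / 2, ⟨by linarith, by linear_combination hs / 4⟩, ?_⟩
  rintro y ⟨hy, hyc⟩
  -- `x + b = c / x > 0` for every positive root `x`
  have hyb : 0 < y + b := by nlinarith
  have hfac : (y - (s - b) / 2) * (y + (s - b) / 2 + b) = 0 := by
    linear_combination hyc - hs / 4
  rcases mul_eq_zero.mp hfac with h | h
  · linarith
  · linarith

lemma fixedPoint_equations_iff_quadratic {lam g d E ζ : ℝ} (hlam : 0 < lam) (hg : 0 ≤ g) (hd : 0 < d)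
    (hE : 0 < E) :
    (E / d = 2 * lam * ζ ∧ ζ = (E + g) / (E + g + 2 * lam)) ↔
      (ζ = E / (2 * lam * d) ∧ E ^ 2 + (g + 2 * lam * (1 - d)) * E = 2 * lam * d * g) := by
  have hden : E + g + 2 * lam ≠ 0 := by positivity
  rw [div_eq_iff hd.ne', eq_div_iff hden, eq_div_iff (by positivity)]
  constructor
  · rintro ⟨h1, h2⟩
    exact ⟨by linarith, by linear_combination (E + g + 2 * lam) * h1 + 2 * lam * d * h2⟩
  · rintro ⟨h1, h2⟩
    refine ⟨by linarith, ?_⟩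
    have hζ : ζ = E / (2 * lam * d) := by rw [eq_div_iff (by positivity)]; exact h1
    subst hζ
    field_simp
    linear_combination h2

theorem stmt15_general (lam γ Δt ρ : ℝ) (hlam : 0 < lam) (hγ : 0 < γ) (hΔt : 0 < Δt)
    (hρΔt : ρ * Δt < 1) :
    (∃! p : ℝ × ℝ, 0 < p.1 ∧ 0 < p.2 ∧
        p.1 / (1 - ρ * Δt) = 2 * lam * p.2 ∧
        p.2 = (p.1 + γ * Δt) / (p.1 + γ * Δt + 2 * lam)) ∧
    (∀ E ζ : ℝ, 0 < E → 0 < ζ →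
        E / (1 - ρ * Δt) = 2 * lam * ζ →
        ζ = (E + γ * Δt) / (E + γ * Δt + 2 * lam) →
        ζ < 1) := by
  have hd : 0 < 1 - ρ * Δt := by linarith
  have hg : 0 < γ * Δt := mul_pos hγ hΔt
  obtain ⟨E, ⟨hE, hquad⟩, hE_unique⟩ :=
    existsUnique_pos_sq_add_mul_eq (γ * Δt + 2 * lam * (1 - (1 - ρ * Δt)))
      (by positivity : 0 < 2 * lam * (1 - ρ * Δt) * (γ * Δt))
  refine ⟨⟨(E, E / (2 * lam * (1 - ρ * Δt))), ⟨hE, by positivity,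
    (fixedPoint_equations_iff_quadratic hlam hg.le hd hE).2 ⟨rfl, hquad⟩⟩, ?_⟩, ?_⟩
  · rintro ⟨E', ζ'⟩ ⟨hE', -, hsys⟩
    obtain ⟨hζ', hquad'⟩ := (fixedPoint_equations_iff_quadratic hlam hg.le hd hE').1 hsys
    obtain rfl := hE_unique E' ⟨hE', hquad'⟩
    exact Prod.ext rfl hζ'
  · intro E ζ hE _ _ hζ
    rw [hζ, div_lt_one (by positivity)]
    linarith

/-- for `λ, γ, Δt, ρ > 0` with `ρΔt ∈ (0,1)`, there is a unique pair
`(E, ζ)` with `E > 0`, `ζ > 0` satisfying `E/(1−ρΔt) = 2λζ` and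
`ζ = (E + γΔt)/(E + γΔt + 2λ)`; moreover this `ζ` satisfies `ζ ∈ (0, 1)`. -/
theorem stmt15 (lam γ Δt ρ : ℝ) (hlam : 0 < lam) (hγ : 0 < γ) (hΔt : 0 < Δt)
    (hρ : 0 < ρ) (hρΔt : ρ * Δt < 1) :
    (∃! p : ℝ × ℝ, 0 < p.1 ∧ 0 < p.2 ∧
        p.1 / (1 - ρ * Δt) = 2 * lam * p.2 ∧
        p.2 = (p.1 + γ * Δt) / (p.1 + γ * Δt + 2 * lam)) ∧
    (∀ E ζ : ℝ, 0 < E → 0 < ζ →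
        E / (1 - ρ * Δt) = 2 * lam * ζ →
        ζ = (E + γ * Δt) / (E + γ * Δt + 2 * lam) →
        ζ < 1) :=
  stmt15_general lam γ Δt ρ hlam hγ hΔt hρΔt
end

section
/- Let Δt > 0 with ρΔt ∈ (0, 1), and let β > 0 and β_Σ > 0 satisfy the equation 0 = (1−ρΔt)β²β_Σ² − (2−ρΔt + β_Σγ Δt)(σ_K/σ_S)²ββ_Σ + (σ_K/σ_S)⁴(1−βγΔt). Define λ := β_Σσ_S²/(σ_K² + β_Σ²σ_S²) and φ := 1 − λβ/(1 − λβ_Σ), and assume λβ_Σ < 1 and φ ∈ (0, 1). Let (E, ζ) be the unique pair with E > 0, ζ > 0 satisfying E/(1−ρΔt) = 2λζ and ζ = (E + γΔt)/(E + γΔt + 2λ), and define F by F/(1−ρΔt) = (λφζ + (1−ζ)(1−φ)γΔt)/(φ + (1−φ)(ζ(1−ρΔt) + ρΔt)). Then F + γΔt = λφ/(1−φ). -/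
/-! Writing `x = 1 - φ`, `r = ρΔt` and `k = (σK/σS)²`, the definitions of `λ` and `φ` give
`x k = β β_Σ`, so dividing the equilibrium equation by `k²` turns it into a quadratic in `x`.
Combined once more with the definition of `φ`, that quadratic says
`γΔt · (1 - φ) = λ φ (φ + r (1 - φ))`,
because `(1-r)x² - (2-r)x + 1 = (1 - x)(1 - (1-r)x)`. Under this relation the numerator of the
formula for `F / (1 - r)` is `λφ` times its denominator, whatever `ζ` is, so `F = (1 - r) λ φ`,
and the claim is the same relation read backwards. -/

lemma one_sub_phi_mul_eq {k β βS lam φ : ℝ} (hlam : lam * (k + βS ^ 2) = βS)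
    (hlamβ : lam * β = (1 - φ) * (1 - lam * βS)) :
    (1 - φ) * k = β * βS := by
  linear_combination ((1 - φ) * βS + β) * hlam - (k + βS ^ 2) * hlamβ

lemma equilibrium_quadratic {k r g β βS φ : ℝ} (hk : k ≠ 0)
    (heq : 0 = (1 - r) * β ^ 2 * βS ^ 2 - (2 - r + βS * g) * k * β * βS + k ^ 2 * (1 - β * g))
    (hx : (1 - φ) * k = β * βS) :
    (1 - r) * (1 - φ) ^ 2 - (2 - r + βS * g) * (1 - φ) + 1 - β * g = 0 := by
  refine (mul_eq_zero.mp ?_).resolve_left (pow_ne_zero 2 hk)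
  linear_combination -heq + ((1 - r) * ((1 - φ) * k + β * βS) - (2 - r + βS * g) * k) * hx

lemma inventory_cost_eq {r g β βS lam φ : ℝ}
    (hquad : (1 - r) * (1 - φ) ^ 2 - (2 - r + βS * g) * (1 - φ) + 1 - β * g = 0)
    (hlamβ : lam * β = (1 - φ) * (1 - lam * βS)) :
    g * (1 - φ) = lam * φ * (φ + r * (1 - φ)) := by
  linear_combination -lam * hquad - g * hlamβ

lemma coeff_F_eq {r g lam φ ζ F : ℝ} (hr : 0 ≤ r) (hr1 : r < 1) (hφ0 : 0 < φ)
    (hφ1 : φ < 1) (hζ : 0 < ζ) (hkey : g * (1 - φ) = lam * φ * (φ + r * (1 - φ)))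
    (hF : F / (1 - r) = (lam * φ * ζ + (1 - ζ) * (1 - φ) * g)
        / (φ + (1 - φ) * (ζ * (1 - r) + r))) :
    F = (1 - r) * lam * φ := by
  have hD : 0 < φ + (1 - φ) * (ζ * (1 - r) + r) := by
    have : 0 < ζ * (1 - r) + r := by nlinarith
    nlinarith
  have hnum : lam * φ * ζ + (1 - ζ) * (1 - φ) * g
      = lam * φ * (φ + (1 - φ) * (ζ * (1 - r) + r)) := by
    linear_combination (1 - ζ) * hkey
  rw [hnum, mul_div_cancel_right₀ _ hD.ne', div_eq_iff (by linarith)] at hF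
  linear_combination hF

theorem stmt16_general (σS σK γ ρ Δt β βSum lam φ ζ F : ℝ)
    (hσS : 0 < σS) (hσK : 0 < σK) (hρ : 0 < ρ)
    (hΔt : 0 < Δt) (hρΔt : ρ * Δt < 1)
    (heq : 0 = (1 - ρ * Δt) * β ^ 2 * βSum ^ 2
        - (2 - ρ * Δt + βSum * γ * Δt) * (σK / σS) ^ 2 * β * βSum
        + (σK / σS) ^ 4 * (1 - β * γ * Δt))
    (hlam : lam = βSum * σS ^ 2 / (σK ^ 2 + βSum ^ 2 * σS ^ 2))
    (hφ : φ = 1 - lam * β / (1 - lam * βSum))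
    (hlamβSum : lam * βSum < 1) (hφ0 : 0 < φ) (hφ1 : φ < 1)
    (hζ : 0 < ζ)
    (hF : F / (1 - ρ * Δt)
        = (lam * φ * ζ + (1 - ζ) * (1 - φ) * γ * Δt)
            / (φ + (1 - φ) * (ζ * (1 - ρ * Δt) + ρ * Δt))) :
    F + γ * Δt = lam * φ / (1 - φ) := by
  have hk : (σK / σS) ^ 2 ≠ 0 := by positivity
  have hlam' : lam * ((σK / σS) ^ 2 + βSum ^ 2) = βSum := by
    rw [hlam]; field_simp
  have hlamβ : lam * β = (1 - φ) * (1 - lam * βSum) := by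
    rw [hφ, sub_sub_cancel, div_mul_cancel₀ _ (by linarith)]
  have hquad := equilibrium_quadratic (r := ρ * Δt) (g := γ * Δt) hk (by linear_combination heq)
    (one_sub_phi_mul_eq hlam' hlamβ)
  have hkey := inventory_cost_eq hquad hlamβ
  have hFval := coeff_F_eq (by positivity) hρΔt hφ0 hφ1 hζ hkey (by rw [hF]; ring_nf)
  rw [eq_div_iff (by linarith)]
  linear_combination hkey + (1 - φ) * hFval

/-- Lemma F-identity: under the equilibrium equation for `β` given
`β_Σ`, with `λ = β_Σσ_S²/(σ_K²+β_Σ²σ_S²)`, `φ = 1 − λβ/(1−λβ_Σ)`, `λβ_Σ < 1`,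
`φ ∈ (0,1)`, and `(E, ζ)` the unique positive pair with `E/(1−ρΔt) = 2λζ`,
`ζ = (E+γΔt)/(E+γΔt+2λ)`, the coefficient `F` defined by
`F/(1−ρΔt) = (λφζ + (1−ζ)(1−φ)γΔt)/(φ + (1−φ)(ζ(1−ρΔt) + ρΔt))`
satisfies `F + γΔt = λφ/(1−φ)`. -/
theorem stmt16 (σS σK γ ρ Δt β βSum lam φ E ζ F : ℝ)
    (hσS : 0 < σS) (hσK : 0 < σK) (hγ : 0 < γ) (hρ : 0 < ρ)
    (hΔt : 0 < Δt) (hρΔt : ρ * Δt < 1)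
    (hβ : 0 < β) (hβSum : 0 < βSum)
    (heq : 0 = (1 - ρ * Δt) * β ^ 2 * βSum ^ 2
        - (2 - ρ * Δt + βSum * γ * Δt) * (σK / σS) ^ 2 * β * βSum
        + (σK / σS) ^ 4 * (1 - β * γ * Δt))
    (hlam : lam = βSum * σS ^ 2 / (σK ^ 2 + βSum ^ 2 * σS ^ 2))
    (hφ : φ = 1 - lam * β / (1 - lam * βSum))
    (hlamβSum : lam * βSum < 1) (hφ0 : 0 < φ) (hφ1 : φ < 1)
    (hE : 0 < E) (hζ : 0 < ζ)
    (hEζ : E / (1 - ρ * Δt) = 2 * lam * ζ)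
    (hζeq : ζ = (E + γ * Δt) / (E + γ * Δt + 2 * lam))
    (hF : F / (1 - ρ * Δt)
        = (lam * φ * ζ + (1 - ζ) * (1 - φ) * γ * Δt)
            / (φ + (1 - φ) * (ζ * (1 - ρ * Δt) + ρ * Δt))) :
    F + γ * Δt = lam * φ / (1 - φ) :=
  stmt16_general σS σK γ ρ Δt β βSum lam φ ζ F hσS hσK hρ hΔt hρΔt heq hlam hφ hlamβSum hφ0 hφ1 hζ
    hF
end

section
/- Let Δt > 0 with ρΔt ∈ (0, 1), let β > 0 and β_Σ > 0 satisfy the equation 0 = (1−ρΔt)β²β_Σ² − (2−ρΔt + β_Σγ Δt)(σ_K/σ_S)²ββ_Σ + (σ_K/σ_S)⁴(1−βγΔt), define λ := β_Σσ_S²/(σ_K² + β_Σ²σ_S²), η := 1 − λβ_Σ, φ := 1 − λβ/(1−λβ_Σ), and assume λβ_Σ < 1 and φ ∈ (0, 1). Let (E, ζ) be the unique pair with E > 0, ζ > 0 satisfying E/(1−ρΔt) = 2λζ and ζ = (E+γΔt)/(E+γΔt+2λ); define A := (1−ρΔt)(1−φ)²γΔt/(1−(1−ρΔt)(1−φ)²),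 B := (1−ρΔt)β(2(1−λβ_Σ) − β(A+γΔt)), C := (1−ρΔt)(β(1−φ)(A+γΔt) + φ(1−λβ_Σ)), D := (1−ρΔt)Bσ_S²/(2ρ), F by F/(1−ρΔt) = (λφζ + (1−ζ)(1−φ)γΔt)/(φ + (1−φ)(ζ(1−ρΔt)+ρΔt)), and G by G/(1−ρΔt) = −β(1−ζ)(F+γΔt) + ζ(λβ − η). Define f(M, ΔS, Z; ΔZ) := (ηΔS − λΔZ)(βΔS − φM + ΔZ) − (γΔt/2)(βΔS + (1−φ)M + Z + ΔZ)², v(M, ΔS, Z) := −(A/2)M² + (B/2)ΔS² − C·M·ΔS + D − (E/2)Z² − F·M·Z + G·ΔS·Z, and w(m, z) := −(A/2)m² + (B/2)σ_S²Δt + D − (E/2)z² − F·m·z. Then for all real M, ΔS, Z, the function ΔZ ↦ f(M, ΔS, Z; ΔZ) + w(βΔS + (1−φ)M, Z + ΔZ) attains its supremum over ΔZ ∈ ℝ at ΔZ = −ζZ, and the supremum equals v(M, ΔS, Z)/(1−ρΔt). -/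
/-!
Write `u = 1 - ρΔt`, `g = γΔt`, `κ = 1 - λβ_Σ` and `r = (σ_K/σ_S)²`. Since `λ(r + β_Σ²) = β_Σ`,
the equilibrium equation factors as `(κ - λβ)(κ - uλβ) = gβκ`, and with `λβ = κ(1 - φ)` it becomes
`gβ = κφ(1 - u(1 - φ))`. This forces `F = uλφ` and makes the coefficients of `ΔS` and `M` in
the `ΔZ`-derivative of the objective vanish at `ΔZ = -ζZ`, while the equation for `ζ` kills the
coefficient of `Z`. So the objective is its value at `-ζZ` minus `(2λ + g + E)/2 · (ΔZ + ζZ)²`,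
and matching the coefficients of that value with those of `v/u` is exactly what the defining
equations of `A, …, G` say.
-/

theorem equilibrium_eq_factored {u g β βSum lam r : ℝ} (hβSum : βSum ≠ 0)
    (hr : lam * (r + βSum ^ 2) = βSum)
    (heq : 0 = u * β ^ 2 * βSum ^ 2 - (1 + u + βSum * g) * r * β * βSum
      + r ^ 2 * (1 - β * g)) :
    (1 - lam * βSum - lam * β) * (1 - lam * βSum - u * lam * β)
      = g * β * (1 - lam * βSum) := by
  have h : βSum ^ 2 * ((1 - lam * βSum - lam * β) * (1 - lam * βSum - u * lam * β))
      = βSum ^ 2 * (g * β * (1 - lam * βSum)) := by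
    linear_combination (-lam ^ 2) * heq
      - (-(1 + u + βSum * g) * β * βSum * lam
        + (2 * βSum * (1 - lam * βSum) + (lam * (r + βSum ^ 2) - βSum)) * (1 - β * g)) * hr
  exact mul_left_cancel₀ (pow_ne_zero 2 hβSum) h

section FirstOrderConditions

variable {u g β βSum lam φ : ℝ}

theorem foc_signal_of_equilibrium (hκ : 1 - lam * βSum ≠ 0)
    (hlamβ : lam * β = (1 - lam * βSum) * (1 - φ))
    (hequil : (1 - lam * βSum - lam * β) * (1 - lam * βSum - u * lam * β)
      = g * β * (1 - lam * βSum)) :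
    β * (u * lam * φ + g) = 1 - lam * βSum - lam * β := by
  have h : (1 - lam * βSum) * (β * (u * lam * φ + g))
      = (1 - lam * βSum) * ((1 - lam * βSum) * φ) := by
    linear_combination -hequil + (u * lam * β - (1 - lam * βSum)) * hlamβ
  linear_combination mul_left_cancel₀ hκ h + hlamβ

theorem foc_inventory_of_equilibrium (hκ : 1 - lam * βSum ≠ 0)
    (hlamβ : lam * β = (1 - lam * βSum) * (1 - φ))
    (hequil : (1 - lam * βSum - lam * β) * (1 - lam * βSum - u * lam * β)
      = g * β * (1 - lam * βSum)) :
    (1 - φ) * (u * lam * φ + g) = lam * φ := by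
  refine mul_left_cancel₀ hκ ?_
  linear_combination lam * foc_signal_of_equilibrium hκ hlamβ hequil
    - (u * lam * φ + g + lam) * hlamβ

end FirstOrderConditions

theorem coeffF_eq_of_foc {δ g lam φ ζ F : ℝ} (hδ : 1 - δ ≠ 0)
    (hden : 0 < φ + (1 - φ) * (ζ * (1 - δ) + δ))
    (hfoc : (1 - φ) * ((1 - δ) * lam * φ + g) = lam * φ)
    (hF : F / (1 - δ)
      = (lam * φ * ζ + (1 - ζ) * (1 - φ) * g) / (φ + (1 - φ) * (ζ * (1 - δ) + δ))) :
    F = (1 - δ) * lam * φ := by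
  have hnum : lam * φ * ζ + (1 - ζ) * (1 - φ) * g
      = lam * φ * (φ + (1 - φ) * (ζ * (1 - δ) + δ)) := by
    linear_combination (1 - ζ) * hfoc
  rw [hnum, mul_div_cancel_right₀ _ hden.ne', div_eq_iff hδ] at hF
  linear_combination hF

theorem coeffA_eq_fixedPoint {u φ g A : ℝ} (hu : u ≤ 1) (hφ0 : 0 < φ) (hφ1 : φ < 1)
    (hA : A = u * (1 - φ) ^ 2 * g / (1 - u * (1 - φ) ^ 2)) :
    A = u * (1 - φ) ^ 2 * (A + g) := by
  have hden : 0 < 1 - u * (1 - φ) ^ 2 := by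
    nlinarith [mul_le_mul_of_nonneg_right hu (sq_nonneg (1 - φ))]
  rw [eq_div_iff hden.ne'] at hA
  linear_combination hA

noncomputable def hftReward (η lam β φ g M ΔS Z ΔZ : ℝ) : ℝ :=
  (η * ΔS - lam * ΔZ) * (β * ΔS - φ * M + ΔZ) - g / 2 * (β * ΔS + (1 - φ) * M + Z + ΔZ) ^ 2

noncomputable def hftContinuation (A E F K m z : ℝ) : ℝ :=
  -(A / 2) * m ^ 2 + K - E / 2 * z ^ 2 - F * m * z

section DynamicProgramming

variable {η lam β φ g A E F K ζ : ℝ}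

theorem hftReward_add_continuation_eq_sub_sq (hsig : β * (F + g) = η - lam * β)
    (hinv : (1 - φ) * (F + g) = lam * φ) (hζ : ζ * (E + g + 2 * lam) = E + g)
    (M ΔS Z ΔZ : ℝ) :
    hftReward η lam β φ g M ΔS Z ΔZ + hftContinuation A E F K (β * ΔS + (1 - φ) * M) (Z + ΔZ)
      = hftReward η lam β φ g M ΔS Z (-ζ * Z)
          + hftContinuation A E F K (β * ΔS + (1 - φ) * M) (Z + -ζ * Z)
        - (2 * lam + g + E) / 2 * (ΔZ + ζ * Z) ^ 2 := by
  unfold hftReward hftContinuation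
  linear_combination (ΔZ + ζ * Z) * (-ΔS * hsig - M * hinv + Z * hζ)

theorem mul_hftReward_add_continuation_vertex {u B C D G : ℝ} (hinv : (1 - φ) * (F + g) = lam * φ)
    (hζ : ζ * (E + g + 2 * lam) = E + g)
    (hA : A = u * (1 - φ) ^ 2 * (A + g)) (hB : B = u * β * (2 * η - β * (A + g)))
    (hC : C = u * (β * (1 - φ) * (A + g) + φ * η)) (hD : D = u * K)
    (hE : E = 2 * lam * ζ * u) (hF : F = u * lam * φ)
    (hG : G = (-β * (1 - ζ) * (F + g) + ζ * (lam * β - η)) * u) (M ΔS Z : ℝ) :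
    u * (hftReward η lam β φ g M ΔS Z (-ζ * Z)
        + hftContinuation A E F K (β * ΔS + (1 - φ) * M) (Z + -ζ * Z))
      = -(A / 2) * M ^ 2 + B / 2 * ΔS ^ 2 - C * M * ΔS + D
          - E / 2 * Z ^ 2 - F * M * Z + G * ΔS * Z := by
  unfold hftReward hftContinuation
  linear_combination (M ^ 2 / 2) * hA - (ΔS ^ 2 / 2) * hB + (M * ΔS) * hC - hD
      - (M * Z * u * (1 - ζ)) * hinv + (M * Z) * hF - (ΔS * Z) * hG
      + (Z ^ 2 * u * (1 - ζ) / 2) * hζ + (Z ^ 2 / 2) * hE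

end DynamicProgramming

theorem stmt17_general (σS σK γ ρ Δt β βSum lam η φ E ζ A B C D F G : ℝ)
    (hσS : 0 < σS) (hγ : 0 < γ) (hρ : 0 < ρ)
    (hΔt : 0 < Δt) (hρΔt : ρ * Δt < 1)
    (hβSum : 0 < βSum)
    (heq : 0 = (1 - ρ * Δt) * β ^ 2 * βSum ^ 2
        - (2 - ρ * Δt + βSum * γ * Δt) * (σK / σS) ^ 2 * β * βSum
        + (σK / σS) ^ 4 * (1 - β * γ * Δt))
    (hlam : lam = βSum * σS ^ 2 / (σK ^ 2 + βSum ^ 2 * σS ^ 2))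
    (hη : η = 1 - lam * βSum)
    (hφ : φ = 1 - lam * β / (1 - lam * βSum))
    (hlamβSum : lam * βSum < 1) (hφ0 : 0 < φ) (hφ1 : φ < 1)
    (hζ : 0 < ζ)
    (hEζ : E / (1 - ρ * Δt) = 2 * lam * ζ)
    (hζeq : ζ = (E + γ * Δt) / (E + γ * Δt + 2 * lam))
    (hA : A = (1 - ρ * Δt) * (1 - φ) ^ 2 * γ * Δt / (1 - (1 - ρ * Δt) * (1 - φ) ^ 2))
    (hB : B = (1 - ρ * Δt) * β * (2 * (1 - lam * βSum) - β * (A + γ * Δt)))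
    (hC : C = (1 - ρ * Δt) * (β * (1 - φ) * (A + γ * Δt) + φ * (1 - lam * βSum)))
    (hD : D = (1 - ρ * Δt) * B * σS ^ 2 / (2 * ρ))
    (hF : F / (1 - ρ * Δt)
        = (lam * φ * ζ + (1 - ζ) * (1 - φ) * γ * Δt)
            / (φ + (1 - φ) * (ζ * (1 - ρ * Δt) + ρ * Δt)))
    (hG : G / (1 - ρ * Δt) = -β * (1 - ζ) * (F + γ * Δt) + ζ * (lam * β - η))
    (f : ℝ → ℝ → ℝ → ℝ → ℝ)
    (hf : ∀ M ΔS Z ΔZ, f M ΔS Z ΔZ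
        = (η * ΔS - lam * ΔZ) * (β * ΔS - φ * M + ΔZ)
          - γ * Δt / 2 * (β * ΔS + (1 - φ) * M + Z + ΔZ) ^ 2)
    (v : ℝ → ℝ → ℝ → ℝ)
    (hv : ∀ M ΔS Z, v M ΔS Z
        = -(A / 2) * M ^ 2 + B / 2 * ΔS ^ 2 - C * M * ΔS + D
          - E / 2 * Z ^ 2 - F * M * Z + G * ΔS * Z)
    (w : ℝ → ℝ → ℝ)
    (hw : ∀ m z, w m z
        = -(A / 2) * m ^ 2 + B / 2 * σS ^ 2 * Δt + D - E / 2 * z ^ 2 - F * m * z) :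
    ∀ M ΔS Z : ℝ,
      (∀ ΔZ : ℝ, f M ΔS Z ΔZ + w (β * ΔS + (1 - φ) * M) (Z + ΔZ)
          ≤ f M ΔS Z (-ζ * Z) + w (β * ΔS + (1 - φ) * M) (Z + -ζ * Z)) ∧
      f M ΔS Z (-ζ * Z) + w (β * ΔS + (1 - φ) * M) (Z + -ζ * Z)
        = v M ΔS Z / (1 - ρ * Δt) := by
  have hρΔt_pos : 0 < ρ * Δt := by positivity
  have hu : 0 < 1 - ρ * Δt := by linarith
  have hlam_pos : 0 < lam := by rw [hlam]; positivity
  have hκ : 1 - lam * βSum ≠ 0 := by linarith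
  have hlamβ : lam * β = (1 - lam * βSum) * (1 - φ) := by rw [hφ]; field_simp; ring
  have hequil := equilibrium_eq_factored (u := 1 - ρ * Δt) (g := γ * Δt) (β := β) (lam := lam)
    (r := (σK / σS) ^ 2) hβSum.ne' (by rw [hlam]; field_simp) (by linear_combination heq)
  have hFeq : F = (1 - ρ * Δt) * lam * φ :=
    coeffF_eq_of_foc (g := γ * Δt) (ζ := ζ) hu.ne' (by positivity)
      (foc_inventory_of_equilibrium hκ hlamβ hequil) (by rw [hF]; ring)
  have hE : E = 2 * lam * ζ * (1 - ρ * Δt) := (div_eq_iff hu.ne').1 hEζ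
  have hζfix : ζ * (E + γ * Δt + 2 * lam) = E + γ * Δt := by
    rw [hζeq, div_mul_cancel₀]; rw [hE]; positivity
  have hinv : (1 - φ) * (F + γ * Δt) = lam * φ := by
    rw [hFeq]; exact foc_inventory_of_equilibrium hκ hlamβ hequil
  have hf' : f = hftReward η lam β φ (γ * Δt) := by
    funext M ΔS Z ΔZ; exact hf M ΔS Z ΔZ
  have hw' : w = hftContinuation A E F (B / 2 * σS ^ 2 * Δt + D) := by
    funext m z; rw [hw, hftContinuation]; ring
  intro M ΔS Z
  subst hf' hw'
  refine ⟨fun ΔZ => ?_, ?_⟩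
  · have hsig : β * (F + γ * Δt) = η - lam * β := by
      rw [hFeq, hη]; exact foc_signal_of_equilibrium hκ hlamβ hequil
    have hcurv : 0 ≤ (2 * lam + γ * Δt + E) / 2 * (ΔZ + ζ * Z) ^ 2 := by rw [hE]; positivity
    linarith [hftReward_add_continuation_eq_sub_sq (K := B / 2 * σS ^ 2 * Δt + D) (A := A)
      hsig hinv hζfix M ΔS Z ΔZ]
  · have hA' := coeffA_eq_fixedPoint (u := 1 - ρ * Δt) (g := γ * Δt) (A := A)
      (by linarith) hφ0 hφ1 (by rw [hA]; ring)
    have hD' : D = (1 - ρ * Δt) * (B / 2 * σS ^ 2 * Δt + D) := by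
      rw [hD]; field_simp; ring
    rw [← hη] at hB hC
    rw [hv, eq_div_iff hu.ne', mul_comm]
    exact mul_hftReward_add_continuation_vertex hinv hζfix hA' hB hC hD' hE hFeq
      ((div_eq_iff hu.ne').1 hG) M ΔS Z

/-- dynamic programming equation: with the equilibrium quantities
`λ, η, φ, E, ζ, A, B, C, D, F, G` as in the paper, the per-period reward `f`, the
candidate value function `v`, and `w(m, z) = E[v(m, σ_S√Δt·X, z)]` for standard
Gaussian `X`, the map `ΔZ ↦ f(M, ΔS, Z; ΔZ) + w(βΔS + (1−φ)M, Z + ΔZ)` attains its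
supremum at `ΔZ = −ζZ`, and the supremum equals `v(M, ΔS, Z)/(1−ρΔt)`. -/
theorem stmt17 (σS σK γ ρ Δt β βSum lam η φ E ζ A B C D F G : ℝ)
    (hσS : 0 < σS) (hσK : 0 < σK) (hγ : 0 < γ) (hρ : 0 < ρ)
    (hΔt : 0 < Δt) (hρΔt : ρ * Δt < 1)
    (hβ : 0 < β) (hβSum : 0 < βSum)
    (heq : 0 = (1 - ρ * Δt) * β ^ 2 * βSum ^ 2
        - (2 - ρ * Δt + βSum * γ * Δt) * (σK / σS) ^ 2 * β * βSum
        + (σK / σS) ^ 4 * (1 - β * γ * Δt))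
    (hlam : lam = βSum * σS ^ 2 / (σK ^ 2 + βSum ^ 2 * σS ^ 2))
    (hη : η = 1 - lam * βSum)
    (hφ : φ = 1 - lam * β / (1 - lam * βSum))
    (hlamβSum : lam * βSum < 1) (hφ0 : 0 < φ) (hφ1 : φ < 1)
    (hE : 0 < E) (hζ : 0 < ζ)
    (hEζ : E / (1 - ρ * Δt) = 2 * lam * ζ)
    (hζeq : ζ = (E + γ * Δt) / (E + γ * Δt + 2 * lam))
    (hA : A = (1 - ρ * Δt) * (1 - φ) ^ 2 * γ * Δt / (1 - (1 - ρ * Δt) * (1 - φ) ^ 2))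
    (hB : B = (1 - ρ * Δt) * β * (2 * (1 - lam * βSum) - β * (A + γ * Δt)))
    (hC : C = (1 - ρ * Δt) * (β * (1 - φ) * (A + γ * Δt) + φ * (1 - lam * βSum)))
    (hD : D = (1 - ρ * Δt) * B * σS ^ 2 / (2 * ρ))
    (hF : F / (1 - ρ * Δt)
        = (lam * φ * ζ + (1 - ζ) * (1 - φ) * γ * Δt)
            / (φ + (1 - φ) * (ζ * (1 - ρ * Δt) + ρ * Δt)))
    (hG : G / (1 - ρ * Δt) = -β * (1 - ζ) * (F + γ * Δt) + ζ * (lam * β - η))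
    (f : ℝ → ℝ → ℝ → ℝ → ℝ)
    (hf : ∀ M ΔS Z ΔZ, f M ΔS Z ΔZ
        = (η * ΔS - lam * ΔZ) * (β * ΔS - φ * M + ΔZ)
          - γ * Δt / 2 * (β * ΔS + (1 - φ) * M + Z + ΔZ) ^ 2)
    (v : ℝ → ℝ → ℝ → ℝ)
    (hv : ∀ M ΔS Z, v M ΔS Z
        = -(A / 2) * M ^ 2 + B / 2 * ΔS ^ 2 - C * M * ΔS + D
          - E / 2 * Z ^ 2 - F * M * Z + G * ΔS * Z)
    (w : ℝ → ℝ → ℝ)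
    (hw : ∀ m z, w m z
        = -(A / 2) * m ^ 2 + B / 2 * σS ^ 2 * Δt + D - E / 2 * z ^ 2 - F * m * z) :
    ∀ M ΔS Z : ℝ,
      (∀ ΔZ : ℝ, f M ΔS Z ΔZ + w (β * ΔS + (1 - φ) * M) (Z + ΔZ)
          ≤ f M ΔS Z (-ζ * Z) + w (β * ΔS + (1 - φ) * M) (Z + -ζ * Z)) ∧
      f M ΔS Z (-ζ * Z) + w (β * ΔS + (1 - φ) * M) (Z + -ζ * Z)
        = v M ΔS Z / (1 - ρ * Δt) :=
  stmt17_general σS σK γ ρ Δt β βSum lam η φ E ζ A B C D F G hσS hγ hρ hΔt hρΔt hβSum heq hlam hη hφ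
    hlamβSum hφ0 hφ1 hζ hEζ hζeq hA hB hC hD hF hG f hf v hv w hw
end
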